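/- For k even, the exit time T^{|k|}(p) of the simple random walk from (-k,k) satisfies the distributional identity T^{|k|}(p) = Σ_{i=1}^{N} (T_i^{|k/2|} + T̃_i^{|k/2|}), where T_i^{|k/2|} and T̃_i^{|k/2|} are i.i.d. copies of T^{|k/2|}(p), independent of N, and N is geometric with success probability (π_{k/2}^+(p))^2 + (1 - π_{k/2}^+(p))^2, where π_m^+(p) = p^m/(p^m+(1-p)^m). -/

import Mathlib

open scoped Classical
noncomputable section

def walkPos {n : ℕ} (x : Fin n → Bool) (m : ℕ) : ℤ :=
  ∑ i : Fin n, if (i : ℕ) < m then (if x i then (1 : ℤ) else -1) else 0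

def walkWt {n : ℕ} (p : ℝ) (x : Fin n → Bool) : ℝ :=
  ∏ i : Fin n, if x i then p else 1 - p

/-- `P(T^{|m|} = n)`: the walk started at 0 first leaves `(-m, m)` at time `n`. -/
def exitPMF (p : ℝ) (m n : ℕ) : ℝ :=
  ∑ x : Fin n → Bool,
    if (|walkPos x n| = (m : ℤ) ∧ ∀ j < n, |walkPos x j| < (m : ℤ)) then walkWt p x else 0

/-- `j`-fold convolution power of a pmf `f` on `ℕ`. -/
def convPow (f : ℕ → ℝ) : ℕ → ℕ → ℝ
  | 0, n => if n = 0 then 1 else 0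
  | j + 1, n => ∑ a ∈ Finset.range (n + 1), f a * convPow f j (n - a)

/-!
Let `G` be the generating function of `T^{|2m|}` and `F` that of `T^{|m|}`. Started from `0`, the
walk first leaves `(-m, m)`, at `+m` with probability `π` independently of the exit time (a path
and its mirror image have weights in the fixed ratio `(p / (1 - p)) ^ m`). From `±m` it then
needs a further `T^{|m|}`, after which it has either left `(-2m, 2m)` or is back at `0`, where it
starts afresh. Splitting the walk at these exits gives the renewal equation
`G = q F² + (1 - q) F² G`, whose unique solution is `G = ∑ⱼ q (1 - q)ʲ F^{2(j+1)}`.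
Each splitting identity is proved by first-step analysis: both sides solve the same boundary
value problem on `[-m, m]`, whose solution is unique.
-/

open Finset hiding mk
open PowerSeries

section Walk

variable {n : ℕ}

lemma walkPos_zero (x : Fin n → Bool) : walkPos x 0 = 0 := by
  simp [walkPos]

lemma walkPos_cons_succ (b : Bool) (x : Fin n → Bool) (j : ℕ) :
    walkPos (Fin.cons b x : Fin (n + 1) → Bool) (j + 1) =
      (if b then 1 else -1) + walkPos x j := by
  simp [walkPos, Fin.sum_univ_succ]

lemma walkWt_cons (p : ℝ) (b : Bool) (x : Fin n → Bool) :
    walkWt p (Fin.cons b x : Fin (n + 1) → Bool) = (if b then p else 1 - p) * walkWt p x := by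
  simp [walkWt, Fin.prod_univ_succ]

lemma walkPos_not (x : Fin n → Bool) (j : ℕ) : walkPos (fun i => !x i) j = -walkPos x j := by
  simp only [walkPos, ← sum_neg_distrib]
  refine sum_congr rfl fun i _ => ?_
  split_ifs <;> cases x i <;> simp_all

lemma walkWt_not (p : ℝ) (x : Fin n → Bool) : walkWt p (fun i => !x i) = walkWt (1 - p) x := by
  simp only [walkWt]
  refine prod_congr rfl fun i _ => ?_
  by_cases h : x i <;> simp [h]

lemma walkPos_self (x : Fin n → Bool) :
    walkPos x n = (#{i | x i} : ℤ) - #{i | ¬x i} := by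
  simp [walkPos, sum_ite, sub_eq_add_neg]

lemma walkWt_eq_pow_mul_pow (p : ℝ) (x : Fin n → Bool) :
    walkWt p x = p ^ #{i | x i} * (1 - p) ^ #{i | ¬x i} := by
  simp [walkWt, prod_ite]

lemma walkWt_one_sub_mul_pow (p : ℝ) {L : ℕ} {x : Fin n → Bool} (hx : walkPos x n = L) :
    walkWt (1 - p) x * p ^ L = walkWt p x * (1 - p) ^ L := by
  have hup : #{i | x i} = #{i | ¬x i} + L := by
    rw [walkPos_self] at hx; omega
  rw [walkWt_eq_pow_mul_pow, walkWt_eq_pow_mul_pow, sub_sub_cancel, hup]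
  ring

end Walk

/-- Probability that the walk started at `s` leaves `(-L, L)` for the first time at time `n`,
and does so at the site `e`. -/
def exitAtPMF (p : ℝ) (L : ℕ) (s e : ℤ) (n : ℕ) : ℝ :=
  ∑ x : Fin n → Bool,
    if s + walkPos x n = e ∧ ∀ j < n, |s + walkPos x j| < (L : ℤ) then walkWt p x else 0

section ExitAt

variable (p : ℝ) {L : ℕ}

lemma exitAtPMF_zero (s e : ℤ) : exitAtPMF p L s e 0 = if s = e then 1 else 0 := by
  simp [exitAtPMF, walkPos_zero, walkWt]

lemma exitAtPMF_succ {s : ℤ} (hs : |s| < L) (e : ℤ) (n : ℕ) :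
    exitAtPMF p L s e (n + 1) =
      p * exitAtPMF p L (s + 1) e n + (1 - p) * exitAtPMF p L (s - 1) e n := by
  rw [exitAtPMF, ← (Fin.consEquiv fun _ => Bool).sum_comp, Fintype.sum_prod_type,
    Fintype.sum_bool]
  simp only [Fin.consEquiv, Equiv.coe_fn_mk, walkWt_cons, Nat.forall_lt_succ_left,
    walkPos_zero, walkPos_cons_succ, add_zero, hs, true_and, exitAtPMF, mul_sum, ← add_assoc]
  simp [mul_ite, sub_eq_add_neg]

lemma exitAtPMF_neg_neg (s e : ℤ) (n : ℕ) :
    exitAtPMF p L (-s) (-e) n = exitAtPMF (1 - p) L s e n := by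
  rw [exitAtPMF, exitAtPMF, ← (Equiv.mk (fun x i => !x i) (fun x i => !x i) (fun x => by simp)
    (fun x => by simp)).sum_comp]
  refine sum_congr rfl fun x _ => ?_
  simp only [Equiv.coe_fn_mk, walkPos_not, walkWt_not, ← neg_add, abs_neg, neg_inj]

lemma exitAtPMF_one_sub_mul_pow (n : ℕ) :
    exitAtPMF (1 - p) L 0 L n * p ^ L = exitAtPMF p L 0 L n * (1 - p) ^ L := by
  simp only [exitAtPMF, sum_mul, ite_mul, zero_mul, zero_add]
  refine sum_congr rfl fun x _ => ?_
  split_ifs with h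
  · exact walkWt_one_sub_mul_pow p h.1
  · rfl

lemma exitPMF_eq_add (hL : 0 < L) (n : ℕ) :
    exitPMF p L n = exitAtPMF p L 0 L n + exitAtPMF p L 0 (-L) n := by
  simp only [exitPMF, exitAtPMF, zero_add, ← sum_add_distrib]
  refine sum_congr rfl fun x _ => ?_
  have hne : (L : ℤ) ≠ -L := by omega
  simp only [abs_eq (by positivity : (0 : ℤ) ≤ L)]
  split_ifs <;> simp_all

end ExitAt

/-- `K s` is the time generating function of a quantity obeying first-step analysis for the
walk from `s` while it is inside `(-L, L)`. -/
def SolvesFirstStep (p : ℝ) (L : ℕ) (K : ℤ → ℝ⟦X⟧) : Prop :=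
  ∀ s : ℤ, |s| < L → K s = X * (C p * K (s + 1) + C (1 - p) * K (s - 1))

namespace SolvesFirstStep

variable {p : ℝ} {L : ℕ} {K K' : ℤ → ℝ⟦X⟧}

lemma add (hK : SolvesFirstStep p L K) (hK' : SolvesFirstStep p L K') :
    SolvesFirstStep p L (K + K') := fun s hs => by
  simp only [Pi.add_apply, hK s hs, hK' s hs]
  ring

lemma mul_const (hK : SolvesFirstStep p L K) (H : ℝ⟦X⟧) :
    SolvesFirstStep p L (fun s => K s * H) := fun s hs => by
  simp only [hK s hs]
  ring

lemma comp_add {m : ℕ} (hK : SolvesFirstStep p L K) {s₀ : ℤ} (h : |s₀| + m ≤ L) :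
    SolvesFirstStep p m (fun s => K (s₀ + s)) := fun s hs => by
  simp only [hK (s₀ + s) (by grind [abs_add_le]), add_assoc, add_sub_assoc]

lemma eq_of_boundary (hK : SolvesFirstStep p L K) (hK' : SolvesFirstStep p L K')
    (hpos : K L = K' L) (hneg : K (-L) = K' (-L)) {s : ℤ} (hs : |s| ≤ L) : K s = K' s := by
  have hbd : ∀ {s : ℤ}, |s| = L → K s = K' s := fun hs => by
    rcases abs_eq (by positivity) |>.1 hs with rfl | rfl <;> assumption
  ext n
  induction n generalizing s with
  | zero =>
    obtain hs | hs := hs.lt_or_eq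
    · simp only [hK s hs, hK' s hs, coeff_zero_X_mul]
    · rw [hbd hs]
  | succ n ih =>
    obtain hs | hs := hs.lt_or_eq
    · have h₁ : |s + 1| ≤ L := by grind [abs_le, abs_lt]
      have h₂ : |s - 1| ≤ L := by grind [abs_le, abs_lt]
      simp only [hK s hs, hK' s hs, coeff_succ_X_mul, map_add, coeff_C_mul, ih h₁, ih h₂]
    · rw [hbd hs]

end SolvesFirstStep

section FirstExit

variable (p : ℝ) {L : ℕ}

lemma solvesFirstStep_exitAtPMF {e : ℤ} (he : L ≤ |e|) :
    SolvesFirstStep p L (fun s => mk (exitAtPMF p L s e)) := by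
  intro s hs
  ext (_ | n)
  · have hse : s ≠ e := by rintro rfl; omega
    simp [exitAtPMF_zero, hse]
  · simp only [exitAtPMF_succ p hs, coeff_mk, coeff_succ_X_mul, map_add, coeff_C_mul]

lemma mk_exitAtPMF_of_le_abs {s : ℤ} (hs : L ≤ |s|) (e : ℤ) :
    mk (exitAtPMF p L s e) = if s = e then 1 else 0 := by
  ext (_ | n)
  · simp [exitAtPMF_zero, apply_ite]
  · have : exitAtPMF p L s e (n + 1) = 0 := by
      simp only [exitAtPMF, Nat.forall_lt_succ_left, walkPos_zero, add_zero, not_lt.2 hs,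
        false_and, and_false, if_false, sum_const_zero]
    split_ifs <;> simp [this, coeff_one]

variable {p}

/-- Splitting the walk from `s₀` at its first exit from `s₀ + (-m, m)`. -/
lemma SolvesFirstStep.eq_first_exit {K : ℤ → ℝ⟦X⟧} (hK : SolvesFirstStep p L K) {m : ℕ}
    (hm : 0 < m) {s₀ : ℤ} (h : |s₀| + m ≤ L) :
    K s₀ = mk (exitAtPMF p m 0 m) * K (s₀ + m) + mk (exitAtPMF p m 0 (-m)) * K (s₀ - m) := by
  have hm' : (m : ℤ) ≠ -m := by omega
  have key := (hK.comp_add h).eq_of_boundary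
    (((solvesFirstStep_exitAtPMF p (e := m) (by simp)).mul_const (K (s₀ + m))).add
      ((solvesFirstStep_exitAtPMF p (e := -m) (by simp)).mul_const (K (s₀ - m))))
    ?_ ?_ (s := 0) (by simp)
  · simpa using key
  all_goals simp [mk_exitAtPMF_of_le_abs, hm', hm'.symm, sub_eq_add_neg]

end FirstExit

/-- `π_m⁺(p)`, the probability that the walk leaves `(-m, m)` through `m`. -/
def exitUpProb (p : ℝ) (m : ℕ) : ℝ := p ^ m / (p ^ m + (1 - p) ^ m)

section ExitSide

variable (p : ℝ) {L : ℕ}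

lemma mk_exitPMF_eq_add (hL : 0 < L) :
    mk (exitPMF p L) = mk (exitAtPMF p L 0 L) + mk (exitAtPMF p L 0 (-L)) := by
  ext n
  simp [exitPMF_eq_add p hL]

variable {p}

lemma mk_exitAtPMF_zero_self (hL : 0 < L) (h : p ^ L + (1 - p) ^ L ≠ 0) :
    mk (exitAtPMF p L 0 L) = C (exitUpProb p L) * mk (exitPMF p L) := by
  ext n
  have hrefl := exitAtPMF_one_sub_mul_pow p (L := L) n
  rw [← exitAtPMF_neg_neg, neg_zero] at hrefl
  rw [coeff_C_mul, coeff_mk, coeff_mk, exitPMF_eq_add p hL, exitUpProb]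
  field_simp
  linear_combination -hrefl

lemma mk_exitAtPMF_zero_neg (hL : 0 < L) (h : p ^ L + (1 - p) ^ L ≠ 0) :
    mk (exitAtPMF p L 0 (-L)) = C (1 - exitUpProb p L) * mk (exitPMF p L) := by
  rw [map_sub, map_one]
  linear_combination -mk_exitPMF_eq_add p hL - mk_exitAtPMF_zero_self hL h

lemma mk_exitPMF_two_mul {m : ℕ} (hm : 0 < m) (h : p ^ m + (1 - p) ^ m ≠ 0) :
    let q := exitUpProb p m ^ 2 + (1 - exitUpProb p m) ^ 2
    mk (exitPMF p (2 * m)) = C q * mk (exitPMF p m) ^ 2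
      + C (1 - q) * mk (exitPMF p m) ^ 2 * mk (exitPMF p (2 * m)) := by
  intro q
  set π := exitUpProb p m
  set F := mk (exitPMF p m)
  set G : ℤ → ℝ⟦X⟧ := (fun s => mk (exitAtPMF p (2 * m) s (2 * m)))
    + (fun s => mk (exitAtPMF p (2 * m) s (-(2 * m)))) with hG_def
  have hG : SolvesFirstStep p (2 * m) G :=
    (solvesFirstStep_exitAtPMF p (by simp)).add (solvesFirstStep_exitAtPMF p (by simp))
  have hbd : ∀ s : ℤ, |s| = 2 * m → G s = 1 := fun s hs => by
    have hne : (2 * m : ℤ) ≠ -(2 * m) := by omega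
    simp only [hG_def, Pi.add_apply,
      mk_exitAtPMF_of_le_abs p (L := 2 * m) (s := s) (by push_cast; omega)]
    rcases abs_eq (by positivity) |>.1 hs with rfl | rfl <;> simp [hne, hne.symm]
  have h₀ := hG.eq_first_exit (m := m) hm (s₀ := 0) (by push_cast; simp; omega)
  have hup := hG.eq_first_exit (m := m) hm (s₀ := m) (by push_cast; simp; omega)
  have hdown := hG.eq_first_exit (m := m) hm (s₀ := -m) (by push_cast; simp; omega)
  rw [hbd (m + m) (by rw [abs_of_nonneg (by positivity)]; ring)] at hup
  rw [hbd (-m - m) (by rw [abs_of_nonpos (by omega)]; ring)] at hdown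
  rw [zero_add, zero_sub] at h₀
  rw [sub_self] at hup
  rw [neg_add_cancel] at hdown
  have hG₀ : G 0 = mk (exitPMF p (2 * m)) := (mk_exitPMF_eq_add p (by omega)).symm
  rw [mk_exitAtPMF_zero_self hm h, mk_exitAtPMF_zero_neg hm h, hG₀] at h₀ hup hdown
  simp only [q, map_add, map_sub, map_pow, map_one] at h₀ hup hdown ⊢
  linear_combination h₀ + C π * F * hup + (1 - C π) * F * hdown

end ExitSide

section Renewal

variable {R : Type*}

lemma eq_sum_pow_mul_add_pow_mul [Semiring R] {A B G : R} (h : G = A + B * G) (N : ℕ) :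
    G = ∑ j ∈ range N, B ^ j * A + B ^ N * G := by
  induction N with
  | zero => simp
  | succ N ih =>
    conv_lhs => rw [ih, h]
    rw [sum_range_succ, pow_succ, mul_add, mul_assoc]
    abel

lemma PowerSeries.coeff_pow_mul_eq_zero [CommSemiring R] {B : R⟦X⟧} (hB : constantCoeff B = 0)
    {n k : ℕ} (h : n < k) (G : R⟦X⟧) : coeff n (B ^ k * G) = 0 :=
  X_pow_dvd_iff.1 (dvd_mul_of_dvd_left (pow_dvd_pow_of_dvd (X_dvd_iff.2 hB) k) G) n h

lemma PowerSeries.coeff_eq_sum_of_eq_add_mul [CommSemiring R] {A B G : R⟦X⟧}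
    (hB : constantCoeff B = 0) (h : G = A + B * G) (n : ℕ) :
    coeff n G = ∑ j ∈ range (n + 1), coeff n (B ^ j * A) := by
  conv_lhs => rw [eq_sum_pow_mul_add_pow_mul h (n + 1)]
  rw [map_add, coeff_pow_mul_eq_zero hB n.lt_succ_self, add_zero, map_sum]

end Renewal

lemma convPow_eq_coeff (f : ℕ → ℝ) (j n : ℕ) : convPow f j n = coeff n (mk f ^ j) := by
  induction j generalizing n with
  | zero => simp [convPow, coeff_one]
  | succ j ih =>
    rw [pow_succ', coeff_mul, Nat.sum_antidiagonal_eq_sum_range_succ_mk, convPow]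
    simp [ih]

/-- For even `k = 2m`, `T^{|k|}(p) =_d Σ_{i=1}^N (T_i^{|m|} + T̃_i^{|m|})` where
the summands are i.i.d. copies of `T^{|m|}(p)` independent of `N`, and
`N ~ Geometric((π_m⁺(p))² + (1-π_m⁺(p))²)` with `π_m⁺(p) = p^m/(p^m+(1-p)^m)`. -/
theorem exit_time_decomposition (p : ℝ) (hp : 0 < p) (hp1 : p < 1)
    (m : ℕ) (hm : 0 < m) :
    ∀ n : ℕ,
      exitPMF p (2 * m) n =
        ∑' j : ℕ,
          (((p ^ m / (p ^ m + (1 - p) ^ m)) ^ 2 + (1 - p ^ m / (p ^ m + (1 - p) ^ m)) ^ 2) *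
              (1 - ((p ^ m / (p ^ m + (1 - p) ^ m)) ^ 2 +
                (1 - p ^ m / (p ^ m + (1 - p) ^ m)) ^ 2)) ^ j) *
            convPow (exitPMF p m) (2 * (j + 1)) n := by
  intro n
  rw [show p ^ m / (p ^ m + (1 - p) ^ m) = exitUpProb p m from rfl]
  set q := exitUpProb p m ^ 2 + (1 - exitUpProb p m) ^ 2
  set F := mk (exitPMF p m)
  have hF : constantCoeff F = 0 := by
    simp [F, exitPMF_eq_add p hm, exitAtPMF_zero, hm.ne', (Int.natCast_pos.2 hm).ne]
  have hB : constantCoeff (C (1 - q) * F ^ 2) = 0 := by simp [hF]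
  have hren := coeff_eq_sum_of_eq_add_mul hB
    (mk_exitPMF_two_mul hm (add_pos (pow_pos hp m) (pow_pos (sub_pos.2 hp1) m)).ne') n
  rw [coeff_mk] at hren
  rw [hren, tsum_eq_sum (s := range (n + 1)) fun j hj => ?_]
  · refine sum_congr rfl fun j _ => ?_
    rw [convPow_eq_coeff, ← coeff_C_mul]
    congr 1
    simp only [mul_pow, ← pow_mul, map_mul, map_pow]
    ring
  · rw [convPow_eq_coeff, ← mul_one (F ^ _), coeff_pow_mul_eq_zero hF (by simp at hj; omega),
      mul_zero]
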